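/- arXiv:1401.7413 — 5 statements merged into one kernel-verified Lean document; each statement's English description precedes it below -/
import Mathlib

section
/- Let 0 < q < 2 and let X, Y ∈ ℝ^{m×n} be matrices each of whose columns is nonzero. Let N ∈ ℝ^{n×n} be the diagonal matrix with i-th diagonal entry N_{ii} = (‖Y_i‖_2²)^{q/2 − 1}. Then ‖Y‖_{2,q}^q − ‖X‖_{2,q}^q ≥ (q/2) · Tr((YᵀY − XᵀX) N ). -/
open Matrix

lemma pointwise_concave {a b p : ℝ} (ha : 0 ≤ a) (hb : 0 < b) (hp1 : 0 ≤ p) (hp2 : p ≤ 1) :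
    p * ((b - a) * b ^ (p - 1)) ≤ b ^ p - a ^ p := by
  have hs : (-1 : ℝ) ≤ a / b - 1 := by
    have : 0 ≤ a / b := div_nonneg ha hb.le
    linarith
  have key : (1 + (a / b - 1)) ^ p ≤ 1 + p * (a / b - 1) :=
    rpow_one_add_le_one_add_mul_self hs hp1 hp2
  rw [add_sub_cancel] at key
  have hbpos : (0 : ℝ) < b ^ p := Real.rpow_pos_of_pos hb p
  have hmul := mul_le_mul_of_nonneg_left key hbpos.le
  have hdiv : b ^ p * (a / b) ^ p = a ^ p := by
    rw [Real.div_rpow ha hb.le, mul_div_cancel₀]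
    exact (Real.rpow_pos_of_pos hb p).ne'
  rw [hdiv] at hmul
  have hbp1 : b ^ p * (a / b - 1) = (a - b) * b ^ (p - 1) := by
    have : b ^ (p - 1) = b ^ p / b := by
      rw [Real.rpow_sub hb, Real.rpow_one]
    rw [this]
    field_simp
  nlinarith [hmul, hbp1]

/-- Inequality (13): for `0 < q < 2` and matrices `X, Y` with nonzero columns,
`‖Y‖_{2,q}^q − ‖X‖_{2,q}^q ≥ (q/2)·Tr((YᵀY − XᵀX) N)` where `N` is diagonal with
`Nᵢᵢ = (‖Yᵢ‖₂²)^{q/2−1}`.  Here `‖M‖_{2,q}^q = ∑ᵢ (‖Mᵢ‖₂²)^{q/2}` with `Mᵢ` the `i`-th column. -/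
theorem stmt_1 {m n : ℕ} (q : ℝ) (hq0 : 0 < q) (hq2 : q < 2)
    (X Y : Matrix (Fin m) (Fin n) ℝ)
    (hX : ∀ i, Xᵀ i ≠ 0) (hY : ∀ i, Yᵀ i ≠ 0)
    (N : Matrix (Fin n) (Fin n) ℝ)
    (hN : N = Matrix.diagonal fun i => (∑ j, (Y j i) ^ 2) ^ (q / 2 - 1)) :
    q / 2 * ((Yᵀ * Y - Xᵀ * X) * N).trace ≤
      (∑ i, (∑ j, (Y j i) ^ 2) ^ (q / 2)) - ∑ i, (∑ j, (X j i) ^ 2) ^ (q / 2) := by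
  have htr : ((Yᵀ * Y - Xᵀ * X) * N).trace =
      ∑ i, ((∑ j, (Y j i) ^ 2) - ∑ j, (X j i) ^ 2) * (∑ j, (Y j i) ^ 2) ^ (q / 2 - 1) := by
    subst hN
    simp [Matrix.trace, Matrix.diag, Matrix.mul_apply, Matrix.sub_apply, Matrix.mul_apply,
      Matrix.diagonal, Finset.sum_sub_distrib, sq, Matrix.transpose_apply]
  rw [htr, Finset.mul_sum, ← Finset.sum_sub_distrib]
  apply Finset.sum_le_sum
  intro i _
  have hbpos : 0 < ∑ j, (Y j i) ^ 2 := by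
    have h := hY i
    rcases Function.ne_iff.mp h with ⟨j, hj⟩
    apply Finset.sum_pos' (fun k _ => sq_nonneg _) ⟨j, Finset.mem_univ j, ?_⟩
    have : Y j i ≠ 0 := hj
    positivity
  have hanneg : 0 ≤ ∑ j, (X j i) ^ 2 := Finset.sum_nonneg fun k _ => sq_nonneg _
  exact pointwise_concave hanneg hbpos (by linarith) (by linarith)
end

section
/- Let 0 < p < 1 and let X, Y ∈ ℝ^{n×n} be symmetric positive definite matrices. Then Tr(Y^p) − Tr(X^p) + p · Tr((X − Y) Y^{p−1}) ≥ 0. -/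
open Matrix

/-- Real power of a real symmetric matrix, defined through the spectral decomposition
`A = U · diag(λ₁,…,λₙ) · Uᵀ` as `A^r = U · diag(λ₁^r,…,λₙ^r) · Uᵀ`
(junk value `0` if `A` is not symmetric). -/
noncomputable def mpow {n : ℕ} (A : Matrix (Fin n) (Fin n) ℝ) (r : ℝ) :
    Matrix (Fin n) (Fin n) ℝ :=
  if hA : A.IsHermitian then hA.cfc (fun x : ℝ => x ^ r) else 0

/-! The inequality is Klein's trace inequality for the concave function `x ↦ x ^ p`.
In eigenbases `X = U diag(λ) Uᵀ`, `Y = V diag(μ) Vᵀ` every trace `Tr(f(X) g(Y))` equals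
`∑ᵢⱼ wᵢⱼ f(λᵢ) g(μⱼ)` with the nonnegative weights `wᵢⱼ = ((Uᵀ V)ᵢⱼ)²`; taking `f` or `g`
constant shows that the same weights express `Tr(X^p)`, `Tr(Y^p)` and `Tr(Y · Y^{p-1})`.
The matrix inequality is therefore a nonnegative combination of the scalar tangent-line
inequalities `λ^p ≤ μ^p + (λ - μ) p μ^{p-1}`. -/

lemma Real.rpow_le_rpow_add_sub_mul_rpow_sub_one {p a b : ℝ} (hp0 : 0 ≤ p) (hp1 : p ≤ 1)
    (ha : 0 ≤ a) (hb : 0 < b) : a ^ p ≤ b ^ p + (a - b) * (p * b ^ (p - 1)) := by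
  have bernoulli : (a / b) ^ p ≤ 1 + p * (a / b - 1) := by
    have := rpow_one_add_le_one_add_mul_self (s := a / b - 1) (by linarith [div_nonneg ha hb.le])
      hp0 hp1
    rwa [add_sub_cancel] at this
  rw [Real.div_rpow ha hb.le, div_le_iff₀ (Real.rpow_pos_of_pos hb p)] at bernoulli
  calc a ^ p ≤ (1 + p * (a / b - 1)) * b ^ p := bernoulli
    _ = b ^ p + (a - b) * (p * (b ^ p / b)) := by field_simp
    _ = b ^ p + (a - b) * (p * b ^ (p - 1)) := by rw [Real.rpow_sub_one hb.ne']

lemma Matrix.trace_diagonal_mul_mul_diagonal_mul_star {ι : Type*} [Fintype ι]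
    [DecidableEq ι] (d e : ι → ℝ) (W : Matrix ι ι ℝ) :
    (diagonal d * W * diagonal e * star W).trace = ∑ i, ∑ j, d i * e j * W i j ^ 2 := by
  simp only [trace, diag, mul_apply, diagonal_apply, star_apply, star_trivial, ite_mul, mul_ite,
    zero_mul, mul_zero, Finset.sum_ite_eq, Finset.sum_ite_eq', Finset.mem_univ, if_true]
  exact Finset.sum_congr rfl fun i _ => Finset.sum_congr rfl fun j _ => by ring

namespace Matrix.IsHermitian

variable {ι : Type*} [Fintype ι] [DecidableEq ι] {A B : Matrix ι ι ℝ}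

lemma cfc_one (hA : A.IsHermitian) : hA.cfc (fun _ => 1) = 1 := by
  rw [← hA.cfc_eq]
  exact _root_.cfc_one ℝ A

lemma cfc_id (hA : A.IsHermitian) : hA.cfc (fun x => x) = A := by
  rw [← hA.cfc_eq]
  exact _root_.cfc_id' ℝ A

lemma cfc_mul (hA : A.IsHermitian) (f g : ℝ → ℝ) :
    hA.cfc (fun x => f x * g x) = hA.cfc f * hA.cfc g := by
  simp only [← hA.cfc_eq]
  exact _root_.cfc_mul f g A (A.finite_real_spectrum.continuousOn f)
    (A.finite_real_spectrum.continuousOn g)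

lemma cfc_const_mul (hA : A.IsHermitian) (r : ℝ) (f : ℝ → ℝ) :
    hA.cfc (fun x => r * f x) = r • hA.cfc f := by
  simp only [← hA.cfc_eq]
  exact _root_.cfc_const_mul r f A (A.finite_real_spectrum.continuousOn f)

lemma trace_cfc_mul_cfc (hA : A.IsHermitian) (hB : B.IsHermitian) (f g : ℝ → ℝ) :
    (hA.cfc f * hB.cfc g).trace = ∑ i, ∑ j, f (hA.eigenvalues i) * g (hB.eigenvalues j) *
      (star (hA.eigenvectorUnitary : Matrix ι ι ℝ) * hB.eigenvectorUnitary) i j ^ 2 := by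
  set U : Matrix ι ι ℝ := ↑hA.eigenvectorUnitary
  set V : Matrix ι ι ℝ := ↑hB.eigenvectorUnitary
  have hU : star U * U = 1 := Unitary.star_mul_self_of_mem hA.eigenvectorUnitary.2
  have hU' : U * star U = 1 := Unitary.mul_star_self_of_mem hA.eigenvectorUnitary.2
  have hconj : hA.cfc f * hB.cfc g = U * (diagonal (f ∘ hA.eigenvalues) * (star U * V) *
      diagonal (g ∘ hB.eigenvalues) * star (star U * V)) * star U := by
    simp only [IsHermitian.cfc, Unitary.conjStarAlgAut_apply, RCLike.ofReal_real_eq_id,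
      Function.id_comp, star_mul, star_star, mul_assoc, hU', mul_one]
    rfl
  rw [hconj, trace_mul_cycle, hU, one_mul, trace_diagonal_mul_mul_diagonal_mul_star]
  rfl

theorem trace_cfc_le_of_tangent (hA : A.IsHermitian) (hB : B.IsHermitian) {φ ψ : ℝ → ℝ}
    (htangent : ∀ i j, φ (hA.eigenvalues i) ≤
      φ (hB.eigenvalues j) + (hA.eigenvalues i - hB.eigenvalues j) * ψ (hB.eigenvalues j)) :
    (hA.cfc φ).trace ≤ (hB.cfc φ).trace + ((A - B) * hB.cfc ψ).trace := by
  have hφA : hA.cfc φ = hA.cfc φ * hB.cfc (fun _ => 1) := by rw [hB.cfc_one, mul_one]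
  have hφB : hB.cfc φ = hA.cfc (fun _ => 1) * hB.cfc φ := by rw [hA.cfc_one, one_mul]
  have hψ : (A - B) * hB.cfc ψ =
      hA.cfc (fun x => x) * hB.cfc ψ - hA.cfc (fun _ => 1) * hB.cfc (fun y => y * ψ y) := by
    rw [hA.cfc_id, hA.cfc_one, one_mul, hB.cfc_mul (fun y => y), hB.cfc_id, sub_mul]
  rw [hφA, hφB, hψ, trace_sub]
  simp only [trace_cfc_mul_cfc, ← Finset.sum_sub_distrib, ← Finset.sum_add_distrib]
  gcongr with i _ j _
  have := mul_le_mul_of_nonneg_right (htangent i j) (sq_nonneg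
    ((star (hA.eigenvectorUnitary : Matrix ι ι ℝ) * hB.eigenvectorUnitary) i j))
  linarith

end Matrix.IsHermitian

/-- Inequality (17): for `0 < p < 1` and symmetric positive definite `X, Y`,
`Tr(Y^p) − Tr(X^p) + p·Tr((X − Y)·Y^{p−1}) ≥ 0`. -/
theorem stmt_4 {n : ℕ} (p : ℝ) (hp0 : 0 < p) (hp1 : p < 1)
    (X Y : Matrix (Fin n) (Fin n) ℝ) (hX : X.PosDef) (hY : Y.PosDef) :
    0 ≤ (mpow Y p).trace - (mpow X p).trace + p * ((X - Y) * mpow Y (p - 1)).trace := by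
  have klein := hX.isHermitian.trace_cfc_le_of_tangent hY.isHermitian
    (φ := fun x => x ^ p) (ψ := fun y => p * y ^ (p - 1))
    fun i j => Real.rpow_le_rpow_add_sub_mul_rpow_sub_one hp0.le hp1.le (hX.eigenvalues_pos i).le
      (hY.eigenvalues_pos j)
  rw [hY.isHermitian.cfc_const_mul, mul_smul_comm, trace_smul, smul_eq_mul] at klein
  simp only [mpow, dif_pos hX.isHermitian, dif_pos hY.isHermitian]
  linarith
end

section
/- Let X ∈ ℝ^{d×n}, λ > 0, and 1 ≤ p, q ≤ 2. The function (Z, μ) ↦ Tr((ZᵀZ + μ²I)^{p/2}) + λ ∑_{i=1}^n (‖(XZ − X)_i‖_2² + μ²)^{q/2} is jointly convex in (Z, μ) on ℝ^{n×n} × ℝ. -/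
/-!
Both terms are convex functions of `(Z, μ)` composed with affine maps. Since
`ZᵀZ + μ²I = MᵀM` for `M = [Z; μI]`, the first term is the Schatten functional `∑ₖ σₖ(M)ᵖ`;
the `i`-th summand of the second is `‖vᵢ‖^q` for `vᵢ = ((XZ − X)ᵢ, μ)`, convex because the norm
is convex and `t ↦ t^q` is convex and increasing on `t ≥ 0`.

The Schatten functional is convex for `p ≥ 1`: if `C = aA + bB` has singular triples
`(σₖ, uₖ, vₖ)`, then `σₖ(C) = a⟨uₖ, A vₖ⟩ + b⟨uₖ, B vₖ⟩`. For any `M`, expanding in the singular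
vectors of `M` gives `|⟨uₖ, M vₖ⟩| ≤ ∑ₗ aₖₗ σₗ(M)` with `(aₖₗ)` doubly substochastic (Bessel and
Cauchy–Schwarz), so by Jensen `∑ₖ |⟨uₖ, M vₖ⟩|ᵖ ≤ ∑ₗ σₗ(M)ᵖ`.
-/

open Matrix

/-- The smoothed LRR objective
`J(Z, μ) = Tr((ZᵀZ + μ²I)^{p/2}) + λ·∑ᵢ (‖(XZ − X)ᵢ‖₂² + μ²)^{q/2}`,
where `(XZ − X)ᵢ` denotes the `i`-th column of `XZ − X`. -/
noncomputable def smoothJ {d n : ℕ} (X : Matrix (Fin d) (Fin n) ℝ) (lam p q : ℝ)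
    (Z : Matrix (Fin n) (Fin n) ℝ) (μ : ℝ) : ℝ :=
  (mpow (Zᵀ * Z + μ ^ 2 • (1 : Matrix (Fin n) (Fin n) ℝ)) (p / 2)).trace +
    lam * ∑ i, (∑ j, ((X * Z - X) j i) ^ 2 + μ ^ 2) ^ (q / 2)

theorem convexOn_finset_sum {𝕜 E β ι : Type*} [Semiring 𝕜] [PartialOrder 𝕜] [AddCommMonoid E]
    [AddCommMonoid β] [PartialOrder β] [IsOrderedAddMonoid β] [SMul 𝕜 E] [Module 𝕜 β]
    {s : Set E} (hs : Convex 𝕜 s) (t : Finset ι) {f : ι → E → β}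
    (hf : ∀ i ∈ t, ConvexOn 𝕜 s (f i)) : ConvexOn 𝕜 s fun x => ∑ i ∈ t, f i x := by
  classical
  induction t using Finset.induction_on with
  | empty => simpa using convexOn_const (0 : β) hs
  | insert i t hi ih =>
    simp only [Finset.sum_insert hi]
    exact (hf i (t.mem_insert_self i)).add (ih fun j hj => hf j (Finset.mem_insert_of_mem hj))

theorem Real.rpow_sum_mul_le_sum_mul_rpow {ι : Type*} {p : ℝ} (hp : 1 ≤ p) (s : Finset ι)
    {w t : ι → ℝ} (hw : ∀ i ∈ s, 0 ≤ w i) (hw₁ : ∑ i ∈ s, w i ≤ 1) (ht : ∀ i ∈ s, 0 ≤ t i) :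
    (∑ i ∈ s, w i * t i) ^ p ≤ ∑ i ∈ s, w i * t i ^ p := by
  -- Jensen, with the missing weight `1 - ∑ wᵢ` put on the point `0`
  have := (convexOn_rpow hp).map_add_sum_le hw (sub_add_cancel 1 _) ht (sub_nonneg.2 hw₁)
    (Set.mem_Ici.2 le_rfl)
  simpa [Real.zero_rpow (by linarith : p ≠ 0)] using this

theorem sum_rpow_sum_mul_le_sum_rpow {ι κ : Type*} [Fintype ι] [Fintype κ] {p : ℝ} (hp : 1 ≤ p)
    {a : ι → κ → ℝ} {s : κ → ℝ} (ha : ∀ j k, 0 ≤ a j k) (hrow : ∀ j, ∑ k, a j k ≤ 1)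
    (hcol : ∀ k, ∑ j, a j k ≤ 1) (hs : ∀ k, 0 ≤ s k) :
    ∑ j, (∑ k, a j k * s k) ^ p ≤ ∑ k, s k ^ p :=
  calc ∑ j, (∑ k, a j k * s k) ^ p ≤ ∑ j, ∑ k, a j k * s k ^ p :=
        Finset.sum_le_sum fun j _ => Real.rpow_sum_mul_le_sum_mul_rpow hp _
          (fun k _ => ha j k) (hrow j) (fun k _ => hs k)
    _ = ∑ k, (∑ j, a j k) * s k ^ p := by
        rw [Finset.sum_comm]
        simp only [Finset.sum_mul]
    _ ≤ ∑ k, s k ^ p := Finset.sum_le_sum fun k _ =>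
        mul_le_of_le_one_left (Real.rpow_nonneg (hs k) p) (hcol k)

theorem convexOn_norm_rpow {E : Type*} [SeminormedAddCommGroup E] [NormedSpace ℝ E] {q : ℝ}
    (hq : 1 ≤ q) : ConvexOn ℝ Set.univ fun x : E => ‖x‖ ^ q :=
  ⟨convex_univ, fun x _ y _ a b ha hb hab =>
    calc ‖a • x + b • y‖ ^ q ≤ (a • ‖x‖ + b • ‖y‖) ^ q :=
          Real.rpow_le_rpow (norm_nonneg _)
            ((convexOn_norm convex_univ).2 trivial trivial ha hb hab) (by linarith)
      _ ≤ a • ‖x‖ ^ q + b • ‖y‖ ^ q :=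
          (convexOn_rpow hq).2 (norm_nonneg x) (norm_nonneg y) ha hb hab⟩

theorem convexOn_rpow_sum_sq {ι : Type*} [Fintype ι] {q : ℝ} (hq : 1 ≤ q) :
    ConvexOn ℝ Set.univ fun v : ι → ℝ => (∑ j, v j ^ 2) ^ (q / 2) := by
  refine ((convexOn_norm_rpow (E := EuclideanSpace ℝ ι) hq).comp_linearMap
    (WithLp.linearEquiv 2 ℝ (ι → ℝ)).symm.toLinearMap).congr fun v _ => ?_
  simp only [Function.comp_apply, LinearEquiv.coe_coe]
  rw [← EuclideanSpace.real_norm_sq_eq, ← Real.rpow_natCast, ← Real.rpow_mul (norm_nonneg _),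
    Nat.cast_ofNat, mul_div_cancel₀ q two_ne_zero]
  rfl

def IsSubOrthonormal {ι m : Type*} [Fintype m] (g : ι → m → ℝ) : Prop :=
  Pairwise (fun k l => g k ⬝ᵥ g l = 0) ∧ ∀ k, g k ⬝ᵥ g k ≤ 1

namespace IsSubOrthonormal

variable {ι m n : Type*} [Fintype ι] [Fintype m] [Fintype n] {g : ι → m → ℝ}

theorem sum_sq_dotProduct_le (hg : IsSubOrthonormal g) (x : m → ℝ) :
    ∑ k, (g k ⬝ᵥ x) ^ 2 ≤ x ⬝ᵥ x := by
  classical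
  set c := fun k => g k ⬝ᵥ x
  set s := ∑ k, c k • g k
  have hsx : s ⬝ᵥ x = ∑ k, c k ^ 2 := by simp [s, sum_dotProduct, smul_dotProduct, sq, c]
  have hss : s ⬝ᵥ s = ∑ k, c k ^ 2 * (g k ⬝ᵥ g k) := by
    simp only [s, sum_dotProduct, dotProduct_sum, smul_dotProduct, dotProduct_smul, smul_eq_mul]
    refine Finset.sum_congr rfl fun k _ => ?_
    rw [Finset.sum_eq_single k (fun l _ hlk => by rw [hg.1 hlk, mul_zero]) (by simp)]
    ring
  have hss_le : s ⬝ᵥ s ≤ ∑ k, c k ^ 2 := hss ▸ Finset.sum_le_sum fun k _ =>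
    mul_le_of_le_one_right (sq_nonneg _) (hg.2 k)
  have h0 : 0 ≤ (x - s) ⬝ᵥ (x - s) := Finset.sum_nonneg fun i _ => mul_self_nonneg _
  rw [sub_dotProduct, dotProduct_sub, dotProduct_sub, dotProduct_comm x s, hsx] at h0
  linarith

theorem sum_abs_dotProduct_mul_abs_dotProduct_le_one (hg : IsSubOrthonormal g) {h : ι → n → ℝ}
    (hh : IsSubOrthonormal h) {x : m → ℝ} {y : n → ℝ} (hx : x ⬝ᵥ x ≤ 1) (hy : y ⬝ᵥ y ≤ 1) :
    ∑ k, |g k ⬝ᵥ x| * |h k ⬝ᵥ y| ≤ 1 := by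
  have hcs := Finset.sum_mul_sq_le_sq_mul_sq Finset.univ (fun k => |g k ⬝ᵥ x|)
    (fun k => |h k ⬝ᵥ y|)
  simp only [sq_abs] at hcs
  refine (sq_le_one_iff₀ (Finset.sum_nonneg fun k _ => by positivity)).1 (hcs.trans ?_)
  exact mul_le_one₀ ((hg.sum_sq_dotProduct_le x).trans hx)
    (Finset.sum_nonneg fun k _ => sq_nonneg _) ((hh.sum_sq_dotProduct_le y).trans hy)

end IsSubOrthonormal

namespace Matrix

variable {m n ι : Type*} [Fintype m] [Fintype n] [DecidableEq n] [Fintype ι] (M : Matrix m n ℝ)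

noncomputable def rightSingularVector (k : n) : n → ℝ :=
  (isHermitian_conjTranspose_mul_self M).eigenvectorBasis k

noncomputable def singularValue (k : n) : ℝ :=
  √((isHermitian_conjTranspose_mul_self M).eigenvalues k)

-- For `σₖ = 0` this is the zero vector (`0⁻¹ = 0`), so the left singular vectors only form a
-- sub-orthonormal family.
noncomputable def leftSingularVector (k : n) : m → ℝ :=
  (M.singularValue k)⁻¹ • (M *ᵥ M.rightSingularVector k)

theorem singularValue_nonneg (k : n) : 0 ≤ M.singularValue k := Real.sqrt_nonneg _

theorem sq_singularValue (k : n) :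
    M.singularValue k ^ 2 = (isHermitian_conjTranspose_mul_self M).eigenvalues k :=
  Real.sq_sqrt (eigenvalues_conjTranspose_mul_self_nonneg M k)

theorem rightSingularVector_dotProduct (k l : n) :
    M.rightSingularVector k ⬝ᵥ M.rightSingularVector l = if k = l then 1 else 0 := by
  rw [← orthonormal_iff_ite.1 (isHermitian_conjTranspose_mul_self M).eigenvectorBasis.orthonormal,
    EuclideanSpace.inner_eq_star_dotProduct, dotProduct_comm]
  rfl

theorem isSubOrthonormal_rightSingularVector : IsSubOrthonormal M.rightSingularVector :=
  ⟨fun k l hkl => (M.rightSingularVector_dotProduct k l).trans (if_neg hkl),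
    fun k => (M.rightSingularVector_dotProduct k k).trans_le (by simp)⟩

theorem sum_dotProduct_smul_rightSingularVector (x : n → ℝ) :
    ∑ k, (M.rightSingularVector k ⬝ᵥ x) • M.rightSingularVector k = x := by
  have := congrArg WithLp.ofLp
    ((isHermitian_conjTranspose_mul_self M).eigenvectorBasis.sum_repr' (WithLp.toLp 2 x))
  simp only [WithLp.ofLp_sum, WithLp.ofLp_smul, EuclideanSpace.inner_eq_star_dotProduct,
    star_trivial] at this
  simpa only [rightSingularVector, dotProduct_comm x] using this

theorem mulVec_dotProduct_mulVec_rightSingularVector (x : n → ℝ) (k : n) :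
    (M *ᵥ x) ⬝ᵥ (M *ᵥ M.rightSingularVector k) =
      M.singularValue k ^ 2 * (x ⬝ᵥ M.rightSingularVector k) := by
  rw [dotProduct_mulVec, vecMul_mulVec, ← dotProduct_mulVec,
    ← conjTranspose_eq_transpose_of_trivial, sq_singularValue, rightSingularVector,
    (isHermitian_conjTranspose_mul_self M).mulVec_eigenvectorBasis, dotProduct_smul, smul_eq_mul]

theorem mulVec_rightSingularVector (k : n) :
    M *ᵥ M.rightSingularVector k = M.singularValue k • M.leftSingularVector k := by
  by_cases hσ : M.singularValue k = 0
  · have h := M.mulVec_dotProduct_mulVec_rightSingularVector (M.rightSingularVector k) k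
    rw [hσ, zero_pow two_ne_zero, zero_mul] at h
    rw [hσ, zero_smul]
    exact dotProduct_self_eq_zero.1 h
  · rw [leftSingularVector, smul_smul, mul_inv_cancel₀ hσ, one_smul]

theorem leftSingularVector_dotProduct_mulVec (k : n) :
    M.leftSingularVector k ⬝ᵥ (M *ᵥ M.rightSingularVector k) = M.singularValue k := by
  rw [leftSingularVector, smul_dotProduct, mulVec_dotProduct_mulVec_rightSingularVector,
    rightSingularVector_dotProduct, if_pos rfl, mul_one, smul_eq_mul]
  by_cases hσ : M.singularValue k = 0
  · simp [hσ]
  · field_simp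

theorem isSubOrthonormal_leftSingularVector : IsSubOrthonormal M.leftSingularVector := by
  refine ⟨fun k l hkl => ?_, fun k => ?_⟩ <;>
    simp only [leftSingularVector, smul_dotProduct, dotProduct_smul,
      mulVec_dotProduct_mulVec_rightSingularVector, rightSingularVector_dotProduct]
  · simp [hkl]
  · rcases eq_or_ne (M.singularValue k) 0 with hσ | hσ <;> simp [hσ, ← mul_assoc, ← sq]

theorem abs_dotProduct_mulVec_le (v : n → ℝ) (w : m → ℝ) :
    |w ⬝ᵥ (M *ᵥ v)| ≤ ∑ k,
      |M.rightSingularVector k ⬝ᵥ v| * |M.leftSingularVector k ⬝ᵥ w| * M.singularValue k := by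
  have hv : M *ᵥ v = ∑ k, ((M.rightSingularVector k ⬝ᵥ v) * M.singularValue k) •
      M.leftSingularVector k := by
    conv_lhs => rw [← M.sum_dotProduct_smul_rightSingularVector v]
    simp only [mulVec_sum, mulVec_smul, mulVec_rightSingularVector, smul_smul]
  rw [hv, dotProduct_sum]
  refine (Finset.abs_sum_le_sum_abs _ _).trans_eq (Finset.sum_congr rfl fun k _ => ?_)
  rw [dotProduct_smul, smul_eq_mul, abs_mul, abs_mul, abs_of_nonneg (M.singularValue_nonneg k),
    dotProduct_comm w]
  ring

theorem sum_abs_dotProduct_mulVec_rpow_le {p : ℝ} (hp : 1 ≤ p) {v : ι → n → ℝ}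
    {w : ι → m → ℝ} (hv : IsSubOrthonormal v) (hw : IsSubOrthonormal w) :
    ∑ j, |w j ⬝ᵥ (M *ᵥ v j)| ^ p ≤ ∑ k, M.singularValue k ^ p := by
  set a : ι → n → ℝ := fun j k =>
    |M.rightSingularVector k ⬝ᵥ v j| * |M.leftSingularVector k ⬝ᵥ w j|
  have hrow (j : ι) : ∑ k, a j k ≤ 1 :=
    M.isSubOrthonormal_rightSingularVector.sum_abs_dotProduct_mul_abs_dotProduct_le_one
      M.isSubOrthonormal_leftSingularVector (hv.2 j) (hw.2 j)
  have hcol (k : n) : ∑ j, a j k ≤ 1 := by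
    simp only [a, dotProduct_comm (M.rightSingularVector k),
      dotProduct_comm (M.leftSingularVector k)]
    exact hv.sum_abs_dotProduct_mul_abs_dotProduct_le_one hw
      (M.isSubOrthonormal_rightSingularVector.2 k) (M.isSubOrthonormal_leftSingularVector.2 k)
  calc ∑ j, |w j ⬝ᵥ (M *ᵥ v j)| ^ p ≤ ∑ j, (∑ k, a j k * M.singularValue k) ^ p :=
        Finset.sum_le_sum fun j _ => Real.rpow_le_rpow (abs_nonneg _)
          (M.abs_dotProduct_mulVec_le (v j) (w j)) (by linarith)
    _ ≤ ∑ k, M.singularValue k ^ p :=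
        sum_rpow_sum_mul_le_sum_rpow hp (fun j k => by positivity) hrow hcol
          M.singularValue_nonneg

theorem convexOn_sum_singularValue_rpow {p : ℝ} (hp : 1 ≤ p) :
    ConvexOn ℝ Set.univ fun M : Matrix m n ℝ => ∑ k, M.singularValue k ^ p := by
  refine ⟨convex_univ, fun A _ B _ a b ha hb hab => ?_⟩
  set C := a • A + b • B
  -- test `A` and `B` against the singular vectors of `C`
  let φ (M : Matrix m n ℝ) (k : n) := C.leftSingularVector k ⬝ᵥ (M *ᵥ C.rightSingularVector k)
  have hφ (M : Matrix m n ℝ) : ∑ k, |φ M k| ^ p ≤ ∑ k, M.singularValue k ^ p :=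
    M.sum_abs_dotProduct_mulVec_rpow_le hp C.isSubOrthonormal_rightSingularVector
      C.isSubOrthonormal_leftSingularVector
  calc ∑ k, C.singularValue k ^ p = ∑ k, |a * φ A k + b * φ B k| ^ p := by
        refine Finset.sum_congr rfl fun k _ => ?_
        rw [← abs_of_nonneg (C.singularValue_nonneg k), ← leftSingularVector_dotProduct_mulVec]
        simp only [φ, C, add_mulVec, smul_mulVec, dotProduct_add, dotProduct_smul, smul_eq_mul]
    _ ≤ ∑ k, (a * |φ A k| ^ p + b * |φ B k| ^ p) := Finset.sum_le_sum fun k _ => by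
        simpa only [Real.norm_eq_abs, smul_eq_mul] using
          (convexOn_norm_rpow (E := ℝ) hp).2 (Set.mem_univ (φ A k)) (Set.mem_univ (φ B k))
            ha hb hab
    _ ≤ a • ∑ k, A.singularValue k ^ p + b • ∑ k, B.singularValue k ^ p := by
        rw [Finset.sum_add_distrib, ← Finset.mul_sum, ← Finset.mul_sum]
        exact add_le_add (mul_le_mul_of_nonneg_left (hφ A) ha)
          (mul_le_mul_of_nonneg_left (hφ B) hb)

theorem trace_mpow_transpose_mul_self {N : ℕ} (M : Matrix m (Fin N) ℝ) (p : ℝ) :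
    (mpow (Mᵀ * M) (p / 2)).trace = ∑ k, M.singularValue k ^ p := by
  have hM := isHermitian_conjTranspose_mul_self M
  rw [← conjTranspose_eq_transpose_of_trivial, mpow, dif_pos hM, IsHermitian.cfc,
    Unitary.conjStarAlgAut_apply, trace_mul_cycle, Unitary.coe_star_mul_self, one_mul,
    trace_diagonal]
  refine Finset.sum_congr rfl fun k _ => ?_
  rw [singularValue, Real.sqrt_eq_rpow,
    ← Real.rpow_mul (eigenvalues_conjTranspose_mul_self_nonneg M k)]
  simp [div_eq_inv_mul]

end Matrix

theorem transpose_mul_self_add_sq_smul_one_eq_fromRows {m : Type*} [Fintype m] [DecidableEq m]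
    (Z : Matrix m m ℝ) (μ : ℝ) :
    Zᵀ * Z + μ ^ 2 • (1 : Matrix m m ℝ) =
      (fromRows Z (μ • 1) : Matrix (m ⊕ m) m ℝ)ᵀ * (fromRows Z (μ • 1) : Matrix (m ⊕ m) m ℝ) := by
  rw [transpose_fromRows, fromCols_mul_fromRows, transpose_smul, transpose_one,
    smul_mul_smul_comm, one_mul, sq]

theorem convexOn_trace_mpow_transpose_mul_self_add_sq_smul_one {n : ℕ} {p : ℝ} (hp : 1 ≤ p) :
    ConvexOn ℝ Set.univ fun Zμ : Matrix (Fin n) (Fin n) ℝ × ℝ =>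
      (mpow (Zμ.1ᵀ * Zμ.1 + Zμ.2 ^ 2 • (1 : Matrix (Fin n) (Fin n) ℝ)) (p / 2)).trace := by
  let L : Matrix (Fin n) (Fin n) ℝ × ℝ →ₗ[ℝ] Matrix (Fin n ⊕ Fin n) (Fin n) ℝ :=
    { toFun := fun Zμ => fromRows Zμ.1 (Zμ.2 • 1)
      map_add' := fun x y => by ext (k | k) j <;> simp [add_smul]
      map_smul' := fun c x => by ext (k | k) j <;> simp [mul_smul] }
  refine ((convexOn_sum_singularValue_rpow hp).comp_linearMap L).congr fun Zμ _ => ?_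
  simp [L, transpose_mul_self_add_sq_smul_one_eq_fromRows, trace_mpow_transpose_mul_self]

theorem convexOn_rpow_sum_sq_mul_sub_add_sq {l m : Type*} [Fintype l] [Fintype m]
    (X : Matrix l m ℝ) (i : m) {q : ℝ} (hq : 1 ≤ q) :
    ConvexOn ℝ Set.univ fun Zμ : Matrix m m ℝ × ℝ =>
      (∑ j, ((X * Zμ.1 - X) j i) ^ 2 + Zμ.2 ^ 2) ^ (q / 2) := by
  let L : Matrix m m ℝ × ℝ →ₗ[ℝ] (l ⊕ Unit → ℝ) :=
    { toFun := fun Zμ => Sum.elim (fun j => (X * Zμ.1) j i) fun _ => Zμ.2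
      map_add' := fun x y => by ext (j | _) <;> simp [Matrix.mul_add]
      map_smul' := fun c x => by ext (j | _) <;> simp }
  refine (((convexOn_rpow_sum_sq hq).translate_right
    (Sum.elim (fun j => -X j i) 0)).comp_linearMap L).congr fun Zμ _ => ?_
  simp [L, Fintype.sum_sum_type, sub_eq_neg_add]

theorem stmt_9_general {d n : ℕ} (X : Matrix (Fin d) (Fin n) ℝ) (lam p q : ℝ)
    (hlam : 0 < lam) (hp1 : 1 ≤ p) (hq1 : 1 ≤ q) :
    ConvexOn ℝ Set.univ
      (fun Zμ : Matrix (Fin n) (Fin n) ℝ × ℝ => smoothJ X lam p q Zμ.1 Zμ.2) :=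
  (convexOn_trace_mpow_transpose_mul_self_add_sq_smul_one hp1).add
    ((convexOn_finset_sum convex_univ Finset.univ fun i _ =>
      convexOn_rpow_sum_sq_mul_sub_add_sq X i hq1).smul hlam.le)

/-- **Theorem 1 (joint convexity).** For `1 ≤ p, q ≤ 2` and `λ > 0`, the smoothed LRR objective
`(Z, μ) ↦ Tr((ZᵀZ + μ²I)^{p/2}) + λ·∑ᵢ (‖(XZ − X)ᵢ‖₂² + μ²)^{q/2}` is jointly convex in
`(Z, μ)` on `ℝ^{n×n} × ℝ`. -/
theorem stmt_9 {d n : ℕ} (X : Matrix (Fin d) (Fin n) ℝ) (lam p q : ℝ)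
    (hlam : 0 < lam) (hp1 : 1 ≤ p) (hp2 : p ≤ 2) (hq1 : 1 ≤ q) (hq2 : q ≤ 2) :
    ConvexOn ℝ Set.univ
      (fun Zμ : Matrix (Fin n) (Fin n) ℝ × ℝ => smoothJ X lam p q Zμ.1 Zμ.2) :=
  stmt_9_general X lam p q hlam hp1 hq1
end

section
/- Let X ∈ ℝ^{d×n}, λ > 0, μ > 0, 0 < p, q < 2, and let Z_t, Z_{t+1} ∈ ℝ^{n×n} satisfy the IRLS update equation p·Z_{t+1}M_t + λq·Xᵀ(XZ_{t+1} − X)N_t = 0, where M_t = (Z_tᵀZ_t + μ²I)^{p/2−1} and N_t is the diagonal matrix with (N_t)_{ii} = (‖(XZ_t − X)_i‖_2² + μ²)^{q/2−1}. Then J(Z_{t+1}, μ) ≤ J(Z_t, μ); i.e., the objective is non-increasing along IRLS iterations. -/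
open Matrix

/-! With `R(Z) = XZ - X`, the objective is majorised at `Z_t` by the convex quadratic
`Q(Z) = J(Z_t) + (p/2)·Tr((ZᵀZ - Z_tᵀZ_t)M_t) + (λq/2)·Tr((R(Z)ᵀR(Z) - R(Z_t)ᵀR(Z_t))N_t)`:
for the first summand this is Klein's trace inequality for the concave `x ↦ x^{p/2}`, for the
second the tangent inequality of `x ↦ x^{q/2}` in each column. The update equation says that
`Z_{t+1}` is a critical point of `Q`, so by convexity
`J(Z_{t+1}) ≤ Q(Z_{t+1}) ≤ Q(Z_t) = J(Z_t)`. -/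

theorem Real.rpow_le_rpow_add_mul_sub {x y r : ℝ} (hx : 0 ≤ x) (hy : 0 < y) (hr0 : 0 ≤ r)
    (hr1 : r ≤ 1) : x ^ r ≤ y ^ r + r * y ^ (r - 1) * (x - y) := by
  have h := rpow_one_add_le_one_add_mul_self (s := x / y - 1)
    (by linarith [div_nonneg hx hy.le]) hr0 hr1
  rw [add_sub_cancel, Real.div_rpow hx hy.le, div_le_iff₀ (by positivity)] at h
  calc x ^ r ≤ (1 + r * (x / y - 1)) * y ^ r := h
    _ = y ^ r + r * (y ^ r / y) * (x - y) := by field_simp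
    _ = _ := by rw [Real.rpow_sub_one hy.ne']

variable {ι : Type*} [Fintype ι]

lemma trace_transpose_mul_self_sub_mul_le {m : Type*} [Fintype m] (Z₀ Z₁ : Matrix m ι ℝ)
    {M : Matrix ι ι ℝ} (hM : M.PosSemidef) :
    ((Z₁ᵀ * Z₁ - Z₀ᵀ * Z₀) * M).trace ≤ 2 * ((Z₁ - Z₀)ᵀ * Z₁ * M).trace := by
  set E := Z₁ - Z₀
  have hM' : Mᵀ = M := by simpa using hM.isHermitian.eq
  have hsymm : (Z₁ᵀ * E * M).trace = (Eᵀ * Z₁ * M).trace := by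
    rw [← trace_transpose, transpose_mul, transpose_mul, hM', transpose_transpose, trace_mul_comm,
      Matrix.mul_assoc]
  have hsq : 0 ≤ (Eᵀ * E * M).trace := by
    rw [trace_mul_cycle, trace_mul_cycle]
    simpa using (hM.mul_mul_conjTranspose_same E).trace_nonneg
  have hexp : Z₁ᵀ * Z₁ - Z₀ᵀ * Z₀ = Eᵀ * Z₁ + Z₁ᵀ * E - Eᵀ * E := by
    simp only [E, transpose_sub, Matrix.sub_mul, Matrix.mul_sub]; abel
  rw [hexp, Matrix.sub_mul, Matrix.add_mul, trace_sub, trace_add, hsymm]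
  linarith

variable [DecidableEq ι]

theorem sum_le_sum_add_mul_of_mem_doublyStochastic {P : Matrix ι ι ℝ}
    (hP : P ∈ doublyStochastic ℝ ι) {f g : ℝ → ℝ} {s t : ι → ℝ}
    (hfg : ∀ i j, f (t j) ≤ f (s i) + g (s i) * (t j - s i)) :
    ∑ j, f (t j) ≤ ∑ i, (f (s i) + g (s i) * ((P *ᵥ t) i - s i)) := by
  calc ∑ j, f (t j) = ∑ i, ∑ j, P i j * f (t j) := by
        simp [Finset.sum_comm (f := fun i j => P i j * f (t j)), ← Finset.sum_mul,
          sum_col_of_mem_doublyStochastic hP]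
    _ ≤ ∑ i, ∑ j, P i j * (f (s i) + g (s i) * (t j - s i)) := by
        gcongr with i _ j _
        exacts [nonneg_of_mem_doublyStochastic hP, hfg i j]
    _ = _ := by
        refine Finset.sum_congr rfl fun i _ => ?_
        have hrow := sum_row_of_mem_doublyStochastic hP i
        simp only [mulVec, dotProduct, mul_add, Finset.sum_add_distrib, ← Finset.sum_mul, hrow,
          mul_sub, Finset.sum_sub_distrib, mul_left_comm _ (g (s i)), ← Finset.mul_sum]
        ring

lemma hadamard_self_mem_doublyStochastic {W : Matrix ι ι ℝ} (hW : W ∈ unitaryGroup ι ℝ) :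
    W ⊙ W ∈ doublyStochastic ℝ ι := by
  have hrow := congrFun₂ ((mem_unitaryGroup_iff).1 hW)
  have hcol := congrFun₂ ((mem_unitaryGroup_iff').1 hW)
  refine mem_doublyStochastic_iff_sum.2 ⟨fun i j => mul_self_nonneg _, fun i => ?_, fun j => ?_⟩
  · simpa [mul_apply] using hrow i i
  · simpa [mul_apply] using hcol j j

namespace Matrix.IsHermitian

variable {A B : Matrix ι ι ℝ}

lemma cfc_eq_mul_diagonal_mul (hA : A.IsHermitian) (f : ℝ → ℝ) :
    hA.cfc f = (hA.eigenvectorUnitary : Matrix ι ι ℝ) * diagonal (f ∘ hA.eigenvalues) *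
      star (hA.eigenvectorUnitary : Matrix ι ι ℝ) :=
  rfl

lemma trace_mul_cfc (hA : A.IsHermitian) (B : Matrix ι ι ℝ) (f : ℝ → ℝ) :
    (B * hA.cfc f).trace = ∑ i, f (hA.eigenvalues i) *
      (star (hA.eigenvectorUnitary : Matrix ι ι ℝ) * B * hA.eigenvectorUnitary) i i := by
  rw [cfc_eq_mul_diagonal_mul, ← Matrix.mul_assoc, ← Matrix.mul_assoc, trace_mul_cycle,
    ← Matrix.mul_assoc]
  simp [Matrix.trace, mul_comm]

lemma trace_cfc (hA : A.IsHermitian) (f : ℝ → ℝ) :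
    (hA.cfc f).trace = ∑ i, f (hA.eigenvalues i) := by
  simpa [Unitary.coe_star_mul_self] using hA.trace_mul_cfc 1 f

-- Klein's trace inequality. In the orthogonal change of basis `W` between the two eigenbases,
-- the squares `W i j ^ 2` form a doubly stochastic matrix, which reduces it to the scalar
-- tangent inequalities `hfg`.
theorem trace_cfc_le (hA : A.IsHermitian) (hB : B.IsHermitian) {f g : ℝ → ℝ}
    (hfg : ∀ i j, f (hB.eigenvalues j) ≤
      f (hA.eigenvalues i) + g (hA.eigenvalues i) * (hB.eigenvalues j - hA.eigenvalues i)) :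
    (hB.cfc f).trace ≤ (hA.cfc f).trace + ((B - A) * hA.cfc g).trace := by
  set V := (hA.eigenvectorUnitary : Matrix ι ι ℝ)
  set W := star hA.eigenvectorUnitary * hB.eigenvectorUnitary
  have hBV : star V * B * V =
      (W : Matrix ι ι ℝ) * diagonal hB.eigenvalues * star (W : Matrix ι ι ℝ) := by
    conv_lhs => rw [hB.spectral_theorem]
    simp [W, V, Matrix.mul_assoc]
  have hAV : star V * A * V = diagonal hA.eigenvalues := hA.conjStarAlgAut_star_eigenvectorUnitary
  have hdiag : ∀ i, (star V * (B - A) * V) i i =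
      ((W ⊙ W : Matrix ι ι ℝ) *ᵥ hB.eigenvalues) i - hA.eigenvalues i := by
    intro i
    rw [Matrix.mul_sub, Matrix.sub_mul, Matrix.sub_apply, hBV, hAV]
    simp [mul_apply, mulVec, dotProduct, diagonal_apply, mul_comm, mul_left_comm]
  rw [trace_cfc, trace_cfc, trace_mul_cfc, ← Finset.sum_add_distrib]
  refine (sum_le_sum_add_mul_of_mem_doublyStochastic
    (hadamard_self_mem_doublyStochastic W.2) hfg).trans_eq (Finset.sum_congr rfl fun i _ => ?_)
  rw [hdiag]

lemma posSemidef_cfc (hA : A.IsHermitian) {f : ℝ → ℝ}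
    (hf : ∀ i, 0 ≤ f (hA.eigenvalues i)) : (hA.cfc f).PosSemidef := by
  rw [IsHermitian.cfc, Unitary.conjStarAlgAut_apply]
  exact (PosSemidef.diagonal fun i => hf i).mul_mul_conjTranspose_same _

end Matrix.IsHermitian

lemma sum_rpow_sum_sq_add_le {m : Type*} [Fintype m] (R₀ R₁ : Matrix m ι ℝ) {c s : ℝ}
    (hc : 0 < c) (hs0 : 0 ≤ s) (hs1 : s ≤ 1) :
    ∑ i, (∑ j, R₁ j i ^ 2 + c) ^ s ≤ ∑ i, (∑ j, R₀ j i ^ 2 + c) ^ s + s *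
      ((R₁ᵀ * R₁ - R₀ᵀ * R₀) * diagonal fun i => (∑ j, R₀ j i ^ 2 + c) ^ (s - 1)).trace := by
  set ν : ι → ℝ := fun i => (∑ j, R₀ j i ^ 2 + c) ^ (s - 1)
  have htrace : ((R₁ᵀ * R₁ - R₀ᵀ * R₀) * diagonal ν).trace =
      ∑ i, ν i * ((∑ j, R₁ j i ^ 2 + c) - (∑ j, R₀ j i ^ 2 + c)) := by
    simp only [trace, diag_apply, mul_diagonal]
    simp only [Matrix.sub_apply, mul_apply, transpose_apply, sq]
    exact Finset.sum_congr rfl fun i _ => by ring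
  rw [htrace, Finset.mul_sum, ← Finset.sum_add_distrib]
  refine Finset.sum_le_sum fun i _ => ?_
  rw [← mul_assoc]
  exact Real.rpow_le_rpow_add_mul_sub (by positivity) (by positivity) hs0 hs1

lemma posDef_transpose_mul_self_add_smul_one {m : Type*} [Fintype m] (Z : Matrix m ι ℝ) {c : ℝ}
    (hc : 0 < c) : (Zᵀ * Z + c • (1 : Matrix ι ι ℝ)).PosDef :=
  PosDef.posSemidef_add (posSemidef_conjTranspose_mul_self Z) (PosDef.one.smul hc)

section mpow

variable {n : ℕ} {A B : Matrix (Fin n) (Fin n) ℝ}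

lemma mpow_eq_cfc (hA : A.IsHermitian) (r : ℝ) : mpow A r = hA.cfc (· ^ r) := dif_pos hA

lemma posSemidef_mpow (hA : A.PosDef) (r : ℝ) : (mpow A r).PosSemidef := by
  rw [mpow_eq_cfc hA.isHermitian]
  exact hA.isHermitian.posSemidef_cfc fun i => Real.rpow_nonneg (hA.eigenvalues_pos i).le r

lemma trace_mpow_le (hA : A.PosDef) (hB : B.PosSemidef) {r : ℝ} (hr0 : 0 ≤ r) (hr1 : r ≤ 1) :
    (mpow B r).trace ≤ (mpow A r).trace + r * ((B - A) * mpow A (r - 1)).trace := by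
  have hscale : r • hA.isHermitian.cfc (· ^ (r - 1)) =
      hA.isHermitian.cfc (fun x => r * x ^ (r - 1)) := by
    rw [← hA.isHermitian.cfc_eq, ← hA.isHermitian.cfc_eq,
      cfc_const_mul r _ A (A.finite_real_spectrum.continuousOn _)]
  rw [mpow_eq_cfc hA.isHermitian, mpow_eq_cfc hA.isHermitian, mpow_eq_cfc hB.isHermitian,
    ← smul_eq_mul, ← trace_smul, ← Matrix.mul_smul, hscale]
  exact hA.isHermitian.trace_cfc_le hB.isHermitian fun i j => Real.rpow_le_rpow_add_mul_sub
    (hB.eigenvalues_nonneg j) (hA.eigenvalues_pos i) hr0 hr1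

end mpow

/-- **Theorem 3 (1): monotonicity.** If `Z_{t+1}` solves the IRLS update equation
`p·Z_{t+1}·M_t + λq·Xᵀ(XZ_{t+1} − X)·N_t = 0` with `M_t = (Z_tᵀZ_t + μ²I)^{p/2−1}` and
`N_t` diagonal with `(N_t)ᵢᵢ = (‖(XZ_t − X)ᵢ‖₂² + μ²)^{q/2−1}`, then
`J(Z_{t+1}, μ) ≤ J(Z_t, μ)`. -/
theorem stmt_11 {d n : ℕ} (X : Matrix (Fin d) (Fin n) ℝ) (lam p q μ : ℝ)
    (hlam : 0 < lam) (hμ : 0 < μ) (hp0 : 0 < p) (hp2 : p < 2) (hq0 : 0 < q) (hq2 : q < 2)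
    (Zt Zt1 Mt Nt : Matrix (Fin n) (Fin n) ℝ)
    (hM : Mt = mpow (Ztᵀ * Zt + μ ^ 2 • (1 : Matrix (Fin n) (Fin n) ℝ)) (p / 2 - 1))
    (hN : Nt = Matrix.diagonal fun i => (∑ j, ((X * Zt - X) j i) ^ 2 + μ ^ 2) ^ (q / 2 - 1))
    (hupd : p • (Zt1 * Mt) + (lam * q) • (Xᵀ * ((X * Zt1 - X) * Nt)) = 0) :
    smoothJ X lam p q Zt1 μ ≤ smoothJ X lam p q Zt μ := by
  have hc : 0 < μ ^ 2 := by positivity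
  have hA₀ := posDef_transpose_mul_self_add_smul_one Zt hc
  have hA₁ := posDef_transpose_mul_self_add_smul_one Zt1 hc
  have hMpsd : Mt.PosSemidef := hM ▸ posSemidef_mpow hA₀ _
  have hNpsd : Nt.PosSemidef :=
    hN ▸ PosSemidef.diagonal fun i => Real.rpow_nonneg (by positivity) _
  have hmatrix := trace_mpow_le hA₀ hA₁.posSemidef (r := p / 2) (by linarith) (by linarith)
  rw [add_sub_add_right_eq_sub, ← hM] at hmatrix
  have hcols := sum_rpow_sum_sq_add_le (X * Zt - X) (X * Zt1 - X) hc (s := q / 2)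
    (by linarith) (by linarith)
  rw [← hN] at hcols
  have hZ := trace_transpose_mul_self_sub_mul_le Zt Zt1 hMpsd
  have hR := trace_transpose_mul_self_sub_mul_le (X * Zt - X) (X * Zt1 - X) hNpsd
  have hstationary : p * ((Zt1 - Zt)ᵀ * Zt1 * Mt).trace +
      lam * q * (((X * Zt1 - X) - (X * Zt - X))ᵀ * (X * Zt1 - X) * Nt).trace = 0 := by
    have h := congrArg (fun Y => ((Zt1 - Zt)ᵀ * Y).trace) hupd
    simp only [Matrix.mul_add, Matrix.mul_smul, trace_add, trace_smul, smul_eq_mul,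
      Matrix.mul_zero, trace_zero] at h
    rw [sub_sub_sub_cancel_right, ← Matrix.mul_sub, transpose_mul]
    simpa only [Matrix.mul_assoc] using h
  unfold smoothJ
  linarith [mul_le_mul_of_nonneg_left hcols hlam.le,
    mul_le_mul_of_nonneg_left hZ (by linarith : 0 ≤ p / 2),
    mul_le_mul_of_nonneg_left hR (by positivity : 0 ≤ lam * (q / 2))]
end

section
/- Let X ∈ ℝ^{d×n}, λ > 0, μ > 0, 0 < p, q < 2, and let Z_t, Z_{t+1} ∈ ℝ^{n×n} satisfy the IRLS update equation p·Z_{t+1}M_t + λq·Xᵀ(XZ_{t+1} − X)N_t = 0, where M_t = (Z_tᵀZ_t + μ²I)^{p/2−1} and N_t is the diagonal matrix with (N_t)_{ii} = (‖(XZ_t − X)_i‖_2² + μ²)^{q/2−1}. Writing E_t = XZ_t − X and E_{t+1} = XZ_{t+1} − X, we have J(Z_t, μ) − J(Z_{t+1}, μ) ≥ (p/2)·Tr((Z_t − Z_{t+1})ᵀ(Z_t − Z_{t+1})M_t) + (λq/2)·Tr((E_t − E_{t+1})ᵀ(E_t − E_{t+1})N_t). -/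
open Matrix

section helpers
variable {n : ℕ} {A B : Matrix (Fin n) (Fin n) ℝ}

lemma trace_swap {m k : ℕ} (Aa Bb : Matrix (Fin m) (Fin k) ℝ) (S : Matrix (Fin k) (Fin k) ℝ)
    (hS : Sᵀ = S) : (Aaᵀ * Bb * S).trace = (Bbᵀ * Aa * S).trace := by
  rw [← Matrix.trace_transpose (Aaᵀ * Bb * S)]
  simp only [Matrix.transpose_mul, Matrix.transpose_transpose, hS]
  rw [Matrix.trace_mul_comm]

lemma expand_tr {m k : ℕ} (P Q : Matrix (Fin m) (Fin k) ℝ) (S : Matrix (Fin k) (Fin k) ℝ)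
    (hS : Sᵀ = S) :
    (Pᵀ * P * S).trace - (Qᵀ * Q * S).trace
      = ((P - Q)ᵀ * (P - Q) * S).trace + 2 * ((P - Q)ᵀ * (Q * S)).trace := by
  have h1 := trace_swap Q (P - Q) S hS
  have hP : Pᵀ * P * S = ((P - Q) + Q)ᵀ * ((P - Q) + Q) * S := by
    rw [sub_add_cancel]
  rw [hP]
  simp only [Matrix.transpose_add, Matrix.add_mul, Matrix.mul_add, Matrix.trace_add]
  rw [← Matrix.mul_assoc]
  linarith [h1]

lemma trace_EEN {dd k : ℕ} (E : Matrix (Fin dd) (Fin k) ℝ) (v : Fin k → ℝ) :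
    (Eᵀ * E * diagonal v).trace = ∑ i, (∑ j, (E j i) ^ 2) * v i := by
  simp only [Matrix.trace, Matrix.diag]
  rw [Finset.sum_congr rfl (fun i _ => Matrix.mul_diagonal ..)]
  simp only [Matrix.mul_apply, Matrix.transpose_apply, sq]

lemma tangent {r a b : ℝ} (h0 : 0 < r) (h1 : r < 1) (ha : 0 < a) (hb : 0 < b) :
    b ^ r ≤ a ^ r + r * a ^ (r - 1) * (b - a) := by
  have h := Real.geom_mean_le_arith_mean2_weighted (by linarith : (0:ℝ) ≤ 1 - r)
    h0.le ha.le hb.le (by ring)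
  have hpow : a ^ (r - 1) * a ^ (1 - r) = 1 := by
    rw [← Real.rpow_add ha]; norm_num
  have harm : a ^ (r-1) * (a ^ (1-r) * b ^ r) ≤ a ^ (r-1) * ((1-r) * a + r * b) :=
    mul_le_mul_of_nonneg_left h (Real.rpow_nonneg ha.le _)
  rw [← mul_assoc, hpow, one_mul] at harm
  have h2 : a ^ (r-1) * a = a ^ r := by
    nth_rewrite 2 [← Real.rpow_one a]
    rw [← Real.rpow_add ha]; ring_nf
  calc b ^ r ≤ a ^ (r-1) * ((1-r) * a + r * b) := harm
    _ = a ^ r + r * a ^ (r-1) * (b - a) := by linear_combination h2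

lemma cfc_real (hA : A.IsHermitian) (f : ℝ → ℝ) :
    hA.cfc f = (hA.eigenvectorUnitary : Matrix (Fin n) (Fin n) ℝ) *
      diagonal (f ∘ hA.eigenvalues) * star (hA.eigenvectorUnitary : Matrix (Fin n) (Fin n) ℝ) := by
  rw [Matrix.IsHermitian.cfc, RCLike.ofReal_real_eq_id]
  rfl

lemma mpow_eq (hA : A.IsHermitian) (r : ℝ) : mpow A r = hA.cfc (fun x : ℝ => x ^ r) :=
  dif_pos hA

lemma cfc_hermitian (hA : A.IsHermitian) (f : ℝ → ℝ) : (hA.cfc f).IsHermitian := by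
  rw [cfc_real]
  unfold Matrix.IsHermitian
  simp only [Matrix.star_eq_conjTranspose, Matrix.conjTranspose_mul,
    Matrix.conjTranspose_conjTranspose, Matrix.diagonal_conjTranspose, Matrix.mul_assoc]
  congr! 2

lemma mpow_hermitian (hA : A.IsHermitian) (r : ℝ) : (mpow A r).IsHermitian := by
  rw [mpow_eq hA]; exact cfc_hermitian hA _

lemma mcfc_id (hA : A.IsHermitian) : hA.cfc (fun x => x) = A := by
  rw [cfc_real]
  exact (hA.spectral_theorem).symm

lemma trace_cfc (hA : A.IsHermitian) (f : ℝ → ℝ) :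
    (hA.cfc f).trace = ∑ i, f (hA.eigenvalues i) := by
  rw [cfc_real, Matrix.trace_mul_cycle,
    Unitary.star_mul_self_of_mem (SetLike.coe_mem _), Matrix.one_mul, Matrix.trace_diagonal]
  rfl

lemma trace_cfc_mul_cfc (hA : A.IsHermitian) (hB : B.IsHermitian) (f g : ℝ → ℝ) :
    (hA.cfc f * hB.cfc g).trace =
      ∑ i, ∑ j, ((star (hA.eigenvectorUnitary : Matrix (Fin n) (Fin n) ℝ) *
        (hB.eigenvectorUnitary : Matrix (Fin n) (Fin n) ℝ)) i j) ^ 2 *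
        f (hA.eigenvalues i) * g (hB.eigenvalues j) := by
  set U : Matrix (Fin n) (Fin n) ℝ := (hA.eigenvectorUnitary : Matrix (Fin n) (Fin n) ℝ) with hU
  set V : Matrix (Fin n) (Fin n) ℝ := (hB.eigenvectorUnitary : Matrix (Fin n) (Fin n) ℝ) with hV
  set W : Matrix (Fin n) (Fin n) ℝ := star U * V with hW
  have hUU : U * star U = 1 := Unitary.mul_star_self_of_mem (SetLike.coe_mem _)
  have hrw : U * (diagonal (f ∘ hA.eigenvalues) * (W * diagonal (g ∘ hB.eigenvalues) * star W))
        * star U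
      = U * diagonal (f ∘ hA.eigenvalues) * star U *
        (V * diagonal (g ∘ hB.eigenvalues) * star V) * (U * star U) := by
    simp only [hW, Matrix.star_mul, star_star, Matrix.mul_assoc]
  rw [cfc_real hA, cfc_real hB, ← hU, ← hV, ← Matrix.mul_one
    (U * diagonal (f ∘ hA.eigenvalues) * star U * (V * diagonal (g ∘ hB.eigenvalues) * star V)),
    ← hUU, ← hrw, Matrix.trace_mul_cycle, ← Matrix.mul_assoc,
    Unitary.star_mul_self_of_mem (SetLike.coe_mem _), Matrix.one_mul]
  simp only [Matrix.trace, Matrix.diag, Matrix.mul_apply, Matrix.diagonal_apply,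
    Matrix.star_apply, star_trivial, Function.comp_apply, ite_mul, mul_ite, zero_mul, mul_zero,
    Finset.sum_ite_eq, Finset.sum_ite_eq', Finset.mem_univ, if_true]
  refine Finset.sum_congr rfl fun i _ => ?_
  rw [Finset.mul_sum]
  refine Finset.sum_congr rfl fun j _ => by ring

lemma klein (hA : A.PosDef) (hB : B.PosDef) {r : ℝ} (h0 : 0 < r) (h1 : r < 1) :
    (mpow B r).trace ≤ (mpow A r).trace + r * ((mpow A (r - 1)) * (B - A)).trace := by
  have hAh := hA.isHermitian
  have hBh := hB.isHermitian
  set U : Matrix (Fin n) (Fin n) ℝ := (hAh.eigenvectorUnitary : Matrix (Fin n) (Fin n) ℝ) with hU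
  set V : Matrix (Fin n) (Fin n) ℝ := (hBh.eigenvectorUnitary : Matrix (Fin n) (Fin n) ℝ) with hV
  set W : Matrix (Fin n) (Fin n) ℝ := star U * V with hW
  set d := hAh.eigenvalues with hd
  set e := hBh.eigenvalues with he
  have hUU : U * star U = 1 := Unitary.mul_star_self_of_mem (SetLike.coe_mem _)
  have hVV : V * star V = 1 := Unitary.mul_star_self_of_mem (SetLike.coe_mem _)
  have hVV' : star V * V = 1 := Unitary.star_mul_self_of_mem (SetLike.coe_mem _)
  have hWW : W * star W = 1 := by
    have : W * star W = star U * (V * star V) * U := by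
      simp only [hW, Matrix.star_mul, star_star, Matrix.mul_assoc]
    rw [this, hVV, Matrix.mul_one, Unitary.star_mul_self_of_mem (SetLike.coe_mem _)]
  have hWW' : star W * W = 1 := by
    have : star W * W = star V * (U * star U) * V := by
      simp only [hW, Matrix.star_mul, star_star, Matrix.mul_assoc]
    rw [this, hUU, Matrix.mul_one, hVV']
  have hrow : ∀ i, ∑ j, (W i j) ^ 2 = 1 := fun i => by
    have h := congrArg (fun M : Matrix (Fin n) (Fin n) ℝ => M i i) hWW
    simpa [Matrix.mul_apply, Matrix.star_apply, star_trivial, sq, Matrix.one_apply] using h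
  have hcol : ∀ j, ∑ i, (W i j) ^ 2 = 1 := fun j => by
    have h := congrArg (fun M : Matrix (Fin n) (Fin n) ℝ => M j j) hWW'
    simpa [Matrix.mul_apply, Matrix.star_apply, star_trivial, sq, Matrix.one_apply] using h
  have hdpos : ∀ i, 0 < d i := fun i => hA.eigenvalues_pos i
  have hepos : ∀ j, 0 < e j := fun j => hB.eigenvalues_pos j
  have T1 : (mpow B r).trace = ∑ j, (e j) ^ r := by
    rw [mpow_eq hBh, trace_cfc]
  have T2 : (mpow A r).trace = ∑ i, (d i) ^ r := by
    rw [mpow_eq hAh, trace_cfc]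
  have T3 : ((mpow A (r - 1)) * B).trace
      = ∑ i, ∑ j, (W i j) ^ 2 * (d i) ^ (r - 1) * e j := by
    nth_rewrite 1 [← mcfc_id hBh]
    rw [mpow_eq hAh, trace_cfc_mul_cfc hAh hBh]
  have T4 : ((mpow A (r - 1)) * A).trace = ∑ i, (d i) ^ (r - 1) * d i := by
    nth_rewrite 2 [← mcfc_id hAh]
    rw [mpow_eq hAh, trace_cfc_mul_cfc hAh hAh]
    have hId : (star (hAh.eigenvectorUnitary : Matrix (Fin n) (Fin n) ℝ) *
        (hAh.eigenvectorUnitary : Matrix (Fin n) (Fin n) ℝ)) = 1 :=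
      Unitary.star_mul_self_of_mem (SetLike.coe_mem _)
    rw [hId]
    refine Finset.sum_congr rfl fun i _ => ?_
    rw [Finset.sum_eq_single i]
    · simp [Matrix.one_apply, hd]
    · intro j _ hj
      simp [Matrix.one_apply, Ne.symm hj]
    · simp
  rw [Matrix.mul_sub, Matrix.trace_sub, T1, T2, T3, T4]
  have E1 : ∑ j, (e j) ^ r = ∑ i, ∑ j, (W i j) ^ 2 * (e j) ^ r := by
    rw [Finset.sum_comm]
    refine Finset.sum_congr rfl fun j _ => ?_
    rw [← Finset.sum_mul, hcol j, one_mul]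
  have E2 : ∑ i, (d i) ^ r = ∑ i, ∑ j, (W i j) ^ 2 * (d i) ^ r := by
    refine Finset.sum_congr rfl fun i _ => ?_
    rw [← Finset.sum_mul, hrow i, one_mul]
  have E3 : ∑ i, (d i) ^ (r - 1) * d i = ∑ i, ∑ j, (W i j) ^ 2 * ((d i) ^ (r - 1) * d i) := by
    refine Finset.sum_congr rfl fun i _ => ?_
    rw [← Finset.sum_mul, hrow i, one_mul]
  rw [E1, E2, E3]
  have key : ∀ i j, (W i j) ^ 2 * e j ^ r ≤ (W i j) ^ 2 * d i ^ r +
      r * ((W i j) ^ 2 * d i ^ (r - 1) * e j - (W i j) ^ 2 * (d i ^ (r - 1) * d i)) := by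
    intro i j
    have ht := tangent h0 h1 (hdpos i) (hepos j)
    calc (W i j) ^ 2 * e j ^ r
        ≤ (W i j) ^ 2 * (d i ^ r + r * d i ^ (r - 1) * (e j - d i)) :=
          mul_le_mul_of_nonneg_left ht (sq_nonneg _)
      _ = _ := by ring
  calc ∑ i, ∑ j, (W i j) ^ 2 * e j ^ r
      ≤ ∑ i, ∑ j, ((W i j) ^ 2 * d i ^ r +
          r * ((W i j) ^ 2 * d i ^ (r - 1) * e j - (W i j) ^ 2 * (d i ^ (r - 1) * d i))) :=
        Finset.sum_le_sum fun i _ => Finset.sum_le_sum fun j _ => key i j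
    _ = ∑ i, ∑ j, (W i j) ^ 2 * d i ^ r +
        r * (∑ i, ∑ j, (W i j) ^ 2 * d i ^ (r - 1) * e j -
          ∑ i, ∑ j, (W i j) ^ 2 * (d i ^ (r - 1) * d i)) := by
      simp only [mul_sub, Finset.mul_sum, Finset.sum_add_distrib, Finset.sum_sub_distrib]

end helpers

/-- Inequality (24): if `Z_{t+1}` solves the IRLS update equation
`p·Z_{t+1}·M_t + λq·Xᵀ(XZ_{t+1} − X)·N_t = 0` (with `M_t`, `N_t` as in the IRLS algorithm) and
`E_t = XZ_t − X`, `E_{t+1} = XZ_{t+1} − X`, then `J(Z_t, μ) − J(Z_{t+1}, μ) ≥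
(p/2)·Tr((Z_t − Z_{t+1})ᵀ(Z_t − Z_{t+1})M_t) + (λq/2)·Tr((E_t − E_{t+1})ᵀ(E_t − E_{t+1})N_t)`. -/
theorem stmt_12 {d n : ℕ} (X : Matrix (Fin d) (Fin n) ℝ) (lam p q μ : ℝ)
    (hlam : 0 < lam) (hμ : 0 < μ) (hp0 : 0 < p) (hp2 : p < 2) (hq0 : 0 < q) (hq2 : q < 2)
    (Zt Zt1 Mt Nt : Matrix (Fin n) (Fin n) ℝ)
    (hM : Mt = mpow (Ztᵀ * Zt + μ ^ 2 • (1 : Matrix (Fin n) (Fin n) ℝ)) (p / 2 - 1))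
    (hN : Nt = Matrix.diagonal fun i => (∑ j, ((X * Zt - X) j i) ^ 2 + μ ^ 2) ^ (q / 2 - 1))
    (hupd : p • (Zt1 * Mt) + (lam * q) • (Xᵀ * ((X * Zt1 - X) * Nt)) = 0) :
    p / 2 * ((Zt - Zt1)ᵀ * (Zt - Zt1) * Mt).trace +
        lam * q / 2 * (((X * Zt - X) - (X * Zt1 - X))ᵀ *
          ((X * Zt - X) - (X * Zt1 - X)) * Nt).trace ≤
      smoothJ X lam p q Zt μ - smoothJ X lam p q Zt1 μ := by
  have hr0 : 0 < p / 2 := by linarith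
  have hr1 : p / 2 < 1 := by linarith
  have hq0' : 0 < q / 2 := by linarith
  have hq1' : q / 2 < 1 := by linarith
  have hposdef : ∀ Z : Matrix (Fin n) (Fin n) ℝ,
      (Zᵀ * Z + μ ^ 2 • (1 : Matrix (Fin n) (Fin n) ℝ)).PosDef := by
    intro Z
    have h1 : (Zᵀ * Z).PosSemidef := by
      rw [← Matrix.conjTranspose_eq_transpose_of_trivial]
      exact Matrix.posSemidef_conjTranspose_mul_self Z
    have h2 : ((μ ^ 2) • (1 : Matrix (Fin n) (Fin n) ℝ)).PosDef := by
      rw [Matrix.smul_one_eq_diagonal]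
      exact Matrix.posDef_diagonal_iff.mpr fun i => by positivity
    exact Matrix.PosDef.posSemidef_add h1 h2
  have hA := hposdef Zt
  have hB := hposdef Zt1
  have hAh := hA.isHermitian
  have hMsym : Mtᵀ = Mt := by
    rw [hM, ← Matrix.conjTranspose_eq_transpose_of_trivial]
    exact mpow_hermitian hAh _
  have hNsym : Ntᵀ = Nt := by rw [hN, Matrix.diagonal_transpose]
  have K := klein hA hB hr0 hr1
  rw [← hM] at K
  have TB : (Mt * ((Zt1ᵀ * Zt1 + μ ^ 2 • (1 : Matrix (Fin n) (Fin n) ℝ)) -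
      (Ztᵀ * Zt + μ ^ 2 • (1 : Matrix (Fin n) (Fin n) ℝ)))).trace
      = (Zt1ᵀ * Zt1 * Mt).trace - (Ztᵀ * Zt * Mt).trace := by
    rw [add_sub_add_right_eq_sub, Matrix.mul_sub, Matrix.trace_sub,
      Matrix.trace_mul_comm Mt, Matrix.trace_mul_comm Mt]
  rw [TB] at K
  -- scalar part
  have hscal : ∀ i : Fin n,
      ((∑ j, ((X * Zt1 - X) j i) ^ 2) + μ ^ 2) ^ (q / 2)
        ≤ ((∑ j, ((X * Zt - X) j i) ^ 2) + μ ^ 2) ^ (q / 2)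
          + q / 2 * ((∑ j, ((X * Zt - X) j i) ^ 2) + μ ^ 2) ^ (q / 2 - 1)
            * (((∑ j, ((X * Zt1 - X) j i) ^ 2) + μ ^ 2)
              - ((∑ j, ((X * Zt - X) j i) ^ 2) + μ ^ 2)) := by
    intro i
    have hpos : ∀ (Z : Matrix (Fin n) (Fin n) ℝ),
        0 < (∑ j, ((X * Z - X) j i) ^ 2) + μ ^ 2 := fun Z =>
      add_pos_of_nonneg_of_pos (Finset.sum_nonneg fun j _ => sq_nonneg _) (by positivity)
    exact tangent hq0' hq1' (hpos Zt) (hpos Zt1)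
  have Sc : ∑ i, ((∑ j, ((X * Zt1 - X) j i) ^ 2) + μ ^ 2) ^ (q / 2)
      ≤ ∑ i, ((∑ j, ((X * Zt - X) j i) ^ 2) + μ ^ 2) ^ (q / 2)
        + q / 2 * ∑ i, ((∑ j, ((X * Zt - X) j i) ^ 2) + μ ^ 2) ^ (q / 2 - 1)
          * (((∑ j, ((X * Zt1 - X) j i) ^ 2) + μ ^ 2)
            - ((∑ j, ((X * Zt - X) j i) ^ 2) + μ ^ 2)) := by
    have h := Finset.sum_le_sum fun i (_ : i ∈ Finset.univ) => hscal i
    rw [Finset.sum_add_distrib] at h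
    refine h.trans (le_of_eq ?_)
    congr 1
    rw [Finset.mul_sum]
    exact Finset.sum_congr rfl fun i _ => by ring
  have TN : ∑ i, ((∑ j, ((X * Zt - X) j i) ^ 2) + μ ^ 2) ^ (q / 2 - 1)
        * (((∑ j, ((X * Zt1 - X) j i) ^ 2) + μ ^ 2)
          - ((∑ j, ((X * Zt - X) j i) ^ 2) + μ ^ 2))
      = ((X * Zt1 - X)ᵀ * (X * Zt1 - X) * Nt).trace
        - ((X * Zt - X)ᵀ * (X * Zt - X) * Nt).trace := by
    rw [hN, trace_EEN, trace_EEN, ← Finset.sum_sub_distrib]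
    refine Finset.sum_congr rfl fun i _ => ?_
    ring
  rw [TN] at Sc
  -- expansions and cross terms
  have Ex1 := expand_tr Zt Zt1 Mt hMsym
  have Ex2 := expand_tr (X * Zt - X) (X * Zt1 - X) Nt hNsym
  have hXD : (X * Zt - X) - (X * Zt1 - X) = X * (Zt - Zt1) := by
    rw [Matrix.mul_sub]; abel
  have hcrossE : ((X * Zt - X) - (X * Zt1 - X))ᵀ * ((X * Zt1 - X) * Nt)
      = (Zt - Zt1)ᵀ * (Xᵀ * ((X * Zt1 - X) * Nt)) := by
    rw [hXD, Matrix.transpose_mul, Matrix.mul_assoc]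
  rw [hcrossE] at Ex2
  have hzero : p * ((Zt - Zt1)ᵀ * (Zt1 * Mt)).trace
      + lam * q * ((Zt - Zt1)ᵀ * (Xᵀ * ((X * Zt1 - X) * Nt))).trace = 0 := by
    have h0 := congrArg (fun M : Matrix (Fin n) (Fin n) ℝ => ((Zt - Zt1)ᵀ * M).trace) hupd
    simpa [Matrix.mul_add, Matrix.mul_smul, Matrix.trace_add, Matrix.trace_smul, smul_eq_mul,
      Matrix.mul_zero, Matrix.trace_zero] using h0
  have idC : p / 2 * ((Zt - Zt1)ᵀ * (Zt - Zt1) * Mt).trace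
      + lam * q / 2 * (((X * Zt - X) - (X * Zt1 - X))ᵀ *
        ((X * Zt - X) - (X * Zt1 - X)) * Nt).trace
      = p / 2 * ((Ztᵀ * Zt * Mt).trace - (Zt1ᵀ * Zt1 * Mt).trace)
        + lam * q / 2 * (((X * Zt - X)ᵀ * (X * Zt - X) * Nt).trace
          - ((X * Zt1 - X)ᵀ * (X * Zt1 - X) * Nt).trace) := by
    linear_combination (-(p / 2)) * Ex1 - (lam * q / 2) * Ex2 - hzero
  rw [idC]
  unfold smoothJ
  have Sc' := mul_le_mul_of_nonneg_left Sc hlam.le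
  linarith [K, Sc']
end
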